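/- arXiv:2206.08868 — 3 statements merged into one kernel-verified Lean document; each statement's English description precedes it below -/
import Mathlib

section
/- If the CG-BiO iterates are run with any stepsizes γ_k ∈ [0,1], then for every k ≥ 0, g(x_{k+1}) − g(x_0) ≤ (1 − γ_k)(g(x_k) − g(x_0)) + (1/2) γ_k² L_g D². -/
open scoped InnerProductSpace

/-!
The iterate moves from `x k` to `x (k + 1)` by `γ k • (s k - x k)` and never leaves `Z`, so the
descent lemma for the `Lg`-smooth `g` applies on `Z`. Its linear term `γ k ⟪∇g (x k), s k - x k⟫`
is at most `γ k (g (x 0) - g (x k))` because `s k` is feasible for the linearized lower-level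
constraint, and its quadratic term is at most `Lg / 2 * γ k ^ 2 * D ^ 2` since `s k, x k ∈ Z`.
-/

variable {E : Type*} [NormedAddCommGroup E] [InnerProductSpace ℝ E] [CompleteSpace E]

theorem HasGradientAt.hasDerivAt_comp_add_smul {g : E → ℝ} {g' a v : E} {t : ℝ}
    (hg : HasGradientAt g g' (a + t • v)) :
    HasDerivAt (fun t : ℝ => g (a + t • v)) ⟪g', v⟫_ℝ t := by
  have hline : HasDerivAt (fun t : ℝ => a + t • v) v t := by
    simpa using ((hasDerivAt_id t).smul_const v).const_add a
  exact hg.hasFDerivAt.comp_hasDerivAt t hline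

theorem Convex.le_add_inner_add_of_lipschitz_gradient {s : Set E} (hs : Convex ℝ s)
    {g : E → ℝ} {g' : E → E} {L : ℝ} (hg : ∀ x ∈ s, HasGradientAt g (g' x) x)
    (hL : ∀ x ∈ s, ∀ y ∈ s, ‖g' x - g' y‖ ≤ L * ‖x - y‖) {a b : E} (ha : a ∈ s) (hb : b ∈ s) :
    g b ≤ g a + ⟪g' a, b - a⟫_ℝ + L / 2 * ‖b - a‖ ^ 2 := by
  set v := b - a
  have hseg : ∀ t ∈ Set.Icc (0 : ℝ) 1, a + t • v ∈ s := fun t ht => by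
    simpa [v, AffineMap.lineMap_apply_module', add_comm] using
      hs.lineMap_mem ha hb ht
  -- `φ` is antitone on `[0, 1]`: by Cauchy–Schwarz and the Lipschitz bound its derivative is `≤ 0`.
  set φ : ℝ → ℝ := fun t => g (a + t • v) - t * ⟪g' a, v⟫_ℝ - L * ‖v‖ ^ 2 / 2 * t ^ 2
  have hφ : ∀ t ∈ Set.Icc (0 : ℝ) 1,
      HasDerivAt φ (⟪g' (a + t • v), v⟫_ℝ - ⟪g' a, v⟫_ℝ - L * ‖v‖ ^ 2 * t) t := fun t ht => by
    have := (((hg _ (hseg t ht)).hasDerivAt_comp_add_smul.sub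
      ((hasDerivAt_id t).mul_const ⟪g' a, v⟫_ℝ)).sub
      ((hasDerivAt_pow 2 t).const_mul (L * ‖v‖ ^ 2 / 2)))
    exact this.congr_deriv (by push_cast; ring)
  have hφ_deriv : ∀ t ∈ interior (Set.Icc (0 : ℝ) 1), deriv φ t ≤ 0 := fun t ht => by
    rw [interior_Icc] at ht
    have ht' : t ∈ Set.Icc (0 : ℝ) 1 := Set.Ioo_subset_Icc_self ht
    rw [(hφ t ht').deriv, ← inner_sub_left]
    calc ⟪g' (a + t • v) - g' a, v⟫_ℝ - L * ‖v‖ ^ 2 * t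
        ≤ ‖g' (a + t • v) - g' a‖ * ‖v‖ - L * ‖v‖ ^ 2 * t := by
          gcongr; exact real_inner_le_norm _ _
      _ ≤ L * ‖a + t • v - a‖ * ‖v‖ - L * ‖v‖ ^ 2 * t := by
          gcongr; exact hL _ (hseg t ht') a ha
      _ = 0 := by
          rw [add_sub_cancel_left, norm_smul, Real.norm_of_nonneg ht.1.le]; ring
  have hanti : AntitoneOn φ (Set.Icc 0 1) :=
    antitoneOn_of_deriv_nonpos (convex_Icc 0 1)
      (fun t ht => (hφ t ht).continuousAt.continuousWithinAt)
      (fun t ht => (hφ t (interior_subset ht)).differentiableAt.differentiableWithinAt)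
      hφ_deriv
  have h01 := hanti (Set.left_mem_Icc.2 zero_le_one) (Set.right_mem_Icc.2 zero_le_one) zero_le_one
  simp only [φ, v, zero_smul, add_zero, one_smul, add_sub_cancel] at h01
  linarith

theorem Convex.mem_of_iterate_convexCombination {F : Type*} [AddCommGroup F] [Module ℝ F] {Z : Set F} (hZ : Convex ℝ Z)
    {x s : ℕ → F} {γ : ℕ → ℝ} (hγ : ∀ k, γ k ∈ Set.Icc (0 : ℝ) 1) (hx0 : x 0 ∈ Z)
    (hs : ∀ k, s k ∈ Z) (hupd : ∀ k, x (k + 1) = (1 - γ k) • x k + γ k • s k) (n : ℕ) :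
    x n ∈ Z := by
  induction n with
  | zero => exact hx0
  | succ n ih =>
    rw [hupd n]
    exact hZ ih (hs n) (by linarith [(hγ n).2]) (hγ n).1 (by ring)

theorem statement6_general {d : ℕ} (Z : Set (EuclideanSpace ℝ (Fin d)))
    (hZconv : Convex ℝ Z)
    (D : ℝ) (hD : ∀ x ∈ Z, ∀ y ∈ Z, ‖x - y‖ ≤ D)
    (g : EuclideanSpace ℝ (Fin d) → ℝ)
    (gradg : EuclideanSpace ℝ (Fin d) → EuclideanSpace ℝ (Fin d))
    (hgdiff : ∀ x, HasGradientAt g (gradg x) x)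
    (Lg : ℝ) (hLg : 0 ≤ Lg)
    (hgLip : ∀ x ∈ Z, ∀ y ∈ Z, ‖gradg x - gradg y‖ ≤ Lg * ‖x - y‖)
    (x s : ℕ → EuclideanSpace ℝ (Fin d)) (γ : ℕ → ℝ)
    (hγ : ∀ k, γ k ∈ Set.Icc (0:ℝ) 1)
    (hx0 : x 0 ∈ Z)
    (hsmem : ∀ k, s k ∈ Z ∧ ⟪gradg (x k), s k - x k⟫_ℝ ≤ g (x 0) - g (x k))
    (hupd : ∀ k, x (k + 1) = (1 - γ k) • x k + γ k • s k)
    (k : ℕ) :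
    g (x (k + 1)) - g (x 0) ≤
      (1 - γ k) * (g (x k) - g (x 0)) + (1/2) * (γ k)^2 * Lg * D^2 := by
  have hxZ := hZconv.mem_of_iterate_convexCombination hγ hx0 (fun k => (hsmem k).1) hupd
  obtain ⟨hsZ, hs_lin⟩ := hsmem k
  have hγ0 : 0 ≤ γ k := (hγ k).1
  have hstep : x (k + 1) - x k = γ k • (s k - x k) := by rw [hupd k]; module
  have hdesc := hZconv.le_add_inner_add_of_lipschitz_gradient (fun y _ => hgdiff y) hgLip
    (hxZ k) (hxZ (k + 1))
  rw [hstep, real_inner_smul_right, norm_smul, Real.norm_of_nonneg hγ0, mul_pow] at hdesc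
  have hinner : γ k * ⟪gradg (x k), s k - x k⟫_ℝ ≤ γ k * (g (x 0) - g (x k)) :=
    mul_le_mul_of_nonneg_left hs_lin hγ0
  have hdiam : Lg / 2 * (γ k ^ 2 * ‖s k - x k‖ ^ 2) ≤ Lg / 2 * (γ k ^ 2 * D ^ 2) := by
    have := hD _ hsZ _ (hxZ k)
    gcongr
  linarith

/-- For CG-BiO iterates with stepsizes `γ_k ∈ [0,1]`,
`g(x_{k+1}) − g(x_0) ≤ (1 − γ_k)(g(x_k) − g(x_0)) + (1/2)γ_k² L_g D²`. -/
theorem statement6 {d : ℕ} (Z : Set (EuclideanSpace ℝ (Fin d)))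
    (hZne : Z.Nonempty) (hZcomp : IsCompact Z) (hZconv : Convex ℝ Z)
    (D : ℝ) (hD : ∀ x ∈ Z, ∀ y ∈ Z, ‖x - y‖ ≤ D)
    (f g : EuclideanSpace ℝ (Fin d) → ℝ)
    (gradf gradg : EuclideanSpace ℝ (Fin d) → EuclideanSpace ℝ (Fin d))
    (hfdiff : ∀ x, HasGradientAt f (gradf x) x)
    (hgconv : ConvexOn ℝ Set.univ g)
    (hgdiff : ∀ x, HasGradientAt g (gradg x) x)
    (Lg : ℝ) (hLg : 0 ≤ Lg)
    (hgLip : ∀ x ∈ Z, ∀ y ∈ Z, ‖gradg x - gradg y‖ ≤ Lg * ‖x - y‖)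
    (x s : ℕ → EuclideanSpace ℝ (Fin d)) (γ : ℕ → ℝ)
    (hγ : ∀ k, γ k ∈ Set.Icc (0:ℝ) 1)
    (hx0 : x 0 ∈ Z)
    (hsmem : ∀ k, s k ∈ Z ∧ ⟪gradg (x k), s k - x k⟫_ℝ ≤ g (x 0) - g (x k))
    (hsmin : ∀ k, ∀ s' ∈ Z, ⟪gradg (x k), s' - x k⟫_ℝ ≤ g (x 0) - g (x k) →
      ⟪gradf (x k), s k⟫_ℝ ≤ ⟪gradf (x k), s'⟫_ℝ)
    (hupd : ∀ k, x (k + 1) = (1 - γ k) • x k + γ k • s k)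
    (k : ℕ) :
    g (x (k + 1)) - g (x 0) ≤
      (1 - γ k) * (g (x k) - g (x 0)) + (1/2) * (γ k)^2 * Lg * D^2 :=
  statement6_general Z hZconv D hD g gradg hgdiff Lg hLg hgLip x s γ hγ hx0 hsmem hupd k
end

section
/- Suppose the CG-BiO iterates are run with a constant stepsize γ ∈ (0,1]. Then for every K ≥ 1, min_{0 ≤ k ≤ K−1} G(x_k) ≤ (f(x_0) − f̲)/(γ K) + (1/2) γ L_f D², where f̲ = min_{x∈Z} f(x) and G(x) = max_{s∈X*_g} ⟨∇f(x), x − s⟩ is the Frank–Wolfe gap. -/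
/-!
Every minimiser `z` of `g` over `Z` is feasible for the linearised constraint defining `X_k`:
by the gradient inequality for convex `g`, `⟪∇g(x_k), z - x_k⟫ ≤ g(z) - g(x_k) ≤ g(x_0) - g(x_k)`.
Hence `G(x_k) ≤ ⟪∇f(x_k), x_k - s_k⟫`. The descent lemma for the `L_f`-smooth `f` along the step
`x_{k+1} - x_k = γ (s_k - x_k)` gives `γ G(x_k) ≤ f(x_k) - f(x_{k+1}) + γ² L_f D² / 2`; summing
over `k < K` telescopes to `f(x_0) - f(x_K) ≤ f(x_0) - f̲`, and the least `G(x_k)` is at most the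
average.
-/

open scoped InnerProductSpace

open AffineMap (lineMap)

section Gradient

variable {F : Type*} [NormedAddCommGroup F] [InnerProductSpace ℝ F] [CompleteSpace F]
  {f : F → ℝ} {x y : F}

theorem HasGradientAt.hasDerivAt_comp_lineMap {t : ℝ} {v : F}
    (hf : HasGradientAt f v (lineMap x y t)) :
    HasDerivAt (fun t : ℝ => f (lineMap x y t)) ⟪v, y - x⟫_ℝ t := by
  have h := hf.hasFDerivAt.comp_hasDerivAt t AffineMap.hasDerivAt_lineMap
  simp only [InnerProductSpace.toDual_apply_apply] at h
  exact h

theorem ConvexOn.inner_sub_le_of_hasGradientAt {s : Set F} {v : F} (hf : ConvexOn ℝ s f)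
    (hx : x ∈ s) (hy : y ∈ s) (hfx : HasGradientAt f v x) :
    ⟪v, y - x⟫_ℝ ≤ f y - f x := by
  have hline : ConvexOn ℝ (lineMap x y ⁻¹' s) (fun t : ℝ => f (lineMap x y t)) :=
    hf.comp_affineMap (lineMap x y)
  have hder : HasDerivAt (fun t : ℝ => f (lineMap x y t)) ⟪v, y - x⟫_ℝ 0 :=
    HasGradientAt.hasDerivAt_comp_lineMap (by simpa using hfx)
  simpa [slope_def_field] using
    hline.le_slope_of_hasDerivAt (by simpa using hx) (by simpa using hy) zero_lt_one hder

theorem le_add_inner_add_of_lipschitz_gradient {f' : F → F} {L : ℝ}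
    (hf : ∀ u, HasGradientAt f (f' u) u) (hLip : ∀ a b, ‖f' a - f' b‖ ≤ L * ‖a - b‖) (x y : F) :
    f y ≤ f x + ⟪f' x, y - x⟫_ℝ + L / 2 * ‖y - x‖ ^ 2 := by
  set v := y - x
  -- `φ` is `f` on the segment minus its quadratic upper model; it is antitone for `t ≥ 0`.
  set φ : ℝ → ℝ := fun t : ℝ => f (lineMap x y t) - t * ⟪f' x, v⟫_ℝ - L / 2 * t ^ 2 * ‖v‖ ^ 2
  have hφ : ∀ t, HasDerivAt φ (⟪f' (lineMap x y t) - f' x, v⟫_ℝ - L * t * ‖v‖ ^ 2) t := by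
    intro t
    have h := (((hf (lineMap x y t)).hasDerivAt_comp_lineMap (x := x)).sub
      ((hasDerivAt_id t).mul_const ⟪f' x, v⟫_ℝ)).sub
      (((hasDerivAt_pow 2 t).const_mul (L / 2)).mul_const (‖v‖ ^ 2))
    refine h.congr_deriv ?_
    rw [inner_sub_left]
    ring
  have hφ' : ∀ t ∈ interior (Set.Ici 0),
      ⟪f' (lineMap x y t) - f' x, v⟫_ℝ - L * t * ‖v‖ ^ 2 ≤ 0 := by
    intro t ht
    rw [interior_Ici, Set.mem_Ioi] at ht
    have hdist : ‖lineMap x y t - x‖ = t * ‖v‖ := by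
      rw [AffineMap.lineMap_apply_module', add_sub_cancel_right, norm_smul,
        Real.norm_of_nonneg ht.le]
    rw [sub_nonpos]
    calc ⟪f' (lineMap x y t) - f' x, v⟫_ℝ ≤ ‖f' (lineMap x y t) - f' x‖ * ‖v‖ :=
          real_inner_le_norm _ _
      _ ≤ L * ‖lineMap x y t - x‖ * ‖v‖ := by gcongr; exact hLip _ _
      _ = L * t * ‖v‖ ^ 2 := by rw [hdist]; ring
  have hanti : AntitoneOn φ (Set.Ici 0) :=
    antitoneOn_of_hasDerivWithinAt_nonpos (convex_Ici 0)
      (fun t _ => (hφ t).continuousAt.continuousWithinAt)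
      (fun t _ => (hφ t).hasDerivWithinAt) hφ'
  have h := hanti Set.self_mem_Ici (Set.mem_Ici.2 zero_le_one) zero_le_one
  simp only [φ, AffineMap.lineMap_apply_zero, AffineMap.lineMap_apply_one] at h
  linarith

theorem le_sub_mul_inner_add_of_step {f' : F → F} {L D γ : ℝ}
    (hf : ∀ u, HasGradientAt f (f' u) u) (hL : 0 ≤ L)
    (hLip : ∀ a b, ‖f' a - f' b‖ ≤ L * ‖a - b‖) {x s : F} (hsx : ‖s - x‖ ≤ D) (hγ : 0 ≤ γ) :
    f ((1 - γ) • x + γ • s) ≤ f x - γ * ⟪f' x, x - s⟫_ℝ + γ ^ 2 * (L * D ^ 2 / 2) := by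
  have hstep : (1 - γ) • x + γ • s - x = γ • (s - x) := by module
  have h := le_add_inner_add_of_lipschitz_gradient hf hLip x ((1 - γ) • x + γ • s)
  have hinner : ⟪f' x, s - x⟫_ℝ = -⟪f' x, x - s⟫_ℝ := by rw [← inner_neg_right, neg_sub]
  rw [hstep, real_inner_smul_right, hinner, norm_smul, Real.norm_of_nonneg hγ, mul_pow] at h
  have hD : ‖s - x‖ ^ 2 ≤ D ^ 2 := pow_le_pow_left₀ (norm_nonneg _) hsx 2
  nlinarith [mul_le_mul_of_nonneg_left hD (by positivity : 0 ≤ γ ^ 2 * L)]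

end Gradient

theorem Convex.mem_of_forall_step_mem {E : Type*} [AddCommGroup E] [Module ℝ E] {Z : Set E}
    (hZ : Convex ℝ Z) {γ : ℝ} (hγ0 : 0 ≤ γ) (hγ1 : γ ≤ 1) {x s : ℕ → E} (hx0 : x 0 ∈ Z)
    (hs : ∀ k, s k ∈ Z) (hupd : ∀ k, x (k + 1) = (1 - γ) • x k + γ • s k) (k : ℕ) : x k ∈ Z := by
  induction k with
  | zero => exact hx0
  | succ k ih => exact hupd k ▸ hZ ih (hs k) (sub_nonneg.2 hγ1) hγ0 (sub_add_cancel 1 γ)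

theorem sSup_image_inner_sub_le {F : Type*} [NormedAddCommGroup F] [InnerProductSpace ℝ F]
    {S : Set F} (hS : S.Nonempty) {a x s : F}
    (hs : ∀ s' ∈ S, ⟪a, s⟫_ℝ ≤ ⟪a, s'⟫_ℝ) :
    sSup ((fun s' => ⟪a, x - s'⟫_ℝ) '' S) ≤ ⟪a, x - s⟫_ℝ := by
  refine csSup_le (hS.image _) ?_
  rintro _ ⟨s', hs', rfl⟩
  simp only [inner_sub_right]
  linarith [hs s' hs']

theorem exists_lt_le_of_mul_le_sub_add {G a : ℕ → ℝ} {γ c m : ℝ} {K : ℕ} (hγ : 0 < γ)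
    (hK : 1 ≤ K) (hstep : ∀ k, γ * G k ≤ a k - a (k + 1) + γ ^ 2 * c) (hm : m ≤ a K) :
    ∃ k < K, G k ≤ (a 0 - m) / (γ * K) + γ * c := by
  have hK0 : (0 : ℝ) < K := by exact_mod_cast hK
  have hle : ∑ k ∈ Finset.range K, G k ≤
      ∑ _k ∈ Finset.range K, ((a 0 - m) / (γ * K) + γ * c) := by
    rw [Finset.sum_const, Finset.card_range, nsmul_eq_mul, ← mul_le_mul_iff_of_pos_left hγ]
    calc γ * ∑ k ∈ Finset.range K, G k
        ≤ ∑ k ∈ Finset.range K, (a k - a (k + 1) + γ ^ 2 * c) := by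
          rw [Finset.mul_sum]; exact Finset.sum_le_sum fun k _ => hstep k
      _ = a 0 - a K + K * (γ ^ 2 * c) := by
          rw [Finset.sum_add_distrib, Finset.sum_range_sub', Finset.sum_const, Finset.card_range,
            nsmul_eq_mul]
      _ ≤ a 0 - m + K * (γ ^ 2 * c) := by linarith
      _ = γ * (K * ((a 0 - m) / (γ * K) + γ * c)) := by field_simp
  obtain ⟨k, hk, hGk⟩ := Finset.exists_le_of_sum_le (Finset.nonempty_range_iff.2 (by omega)) hle
  exact ⟨k, Finset.mem_range.1 hk, hGk⟩

/-- For CG-BiO iterates with constant stepsize `γ ∈ (0,1]`,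
`min_{0≤k≤K−1} G(x_k) ≤ (f(x_0) − f̲)/(γK) + (1/2)γ L_f D²` for every `K ≥ 1`,
where `f̲ = min_{x∈Z} f(x)` and `G(x) = max_{s∈X*_g} ⟨∇f(x), x − s⟩`. -/
theorem statement9 {d : ℕ} (Z : Set (EuclideanSpace ℝ (Fin d)))
    (hZne : Z.Nonempty) (hZcomp : IsCompact Z) (hZconv : Convex ℝ Z)
    (D : ℝ) (hD : ∀ x ∈ Z, ∀ y ∈ Z, ‖x - y‖ ≤ D)
    (f g : EuclideanSpace ℝ (Fin d) → ℝ)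
    (gradf gradg : EuclideanSpace ℝ (Fin d) → EuclideanSpace ℝ (Fin d))
    (hfdiff : ∀ x, HasGradientAt f (gradf x) x)
    (Lf : ℝ) (hLf : 0 ≤ Lf)
    (hfLip : ∀ x y, ‖gradf x - gradf y‖ ≤ Lf * ‖x - y‖)
    (hgconv : ConvexOn ℝ Set.univ g)
    (hgdiff : ∀ x, HasGradientAt g (gradg x) x)
    (γ : ℝ) (hγ0 : 0 < γ) (hγ1 : γ ≤ 1)
    (x s : ℕ → EuclideanSpace ℝ (Fin d))
    (hx0 : x 0 ∈ Z)
    (hsmem : ∀ k, s k ∈ Z ∧ ⟪gradg (x k), s k - x k⟫_ℝ ≤ g (x 0) - g (x k))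
    (hsmin : ∀ k, ∀ s' ∈ Z, ⟪gradg (x k), s' - x k⟫_ℝ ≤ g (x 0) - g (x k) →
      ⟪gradf (x k), s k⟫_ℝ ≤ ⟪gradf (x k), s'⟫_ℝ)
    (hupd : ∀ k, x (k + 1) = (1 - γ) • x k + γ • s k)
    (K : ℕ) (hK : 1 ≤ K) :
    ∃ k < K, sSup ((fun s' => ⟪gradf (x k), x k - s'⟫_ℝ) '' {z | z ∈ Z ∧ IsMinOn g Z z}) ≤
      (f (x 0) - sInf (f '' Z)) / (γ * K) + (1/2) * γ * Lf * D^2 := by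
  have hxZ := hZconv.mem_of_forall_step_mem hγ0.le hγ1 hx0 (fun k => (hsmem k).1) hupd
  have hfcont : Continuous f := continuous_iff_continuousAt.2 fun u => (hfdiff u).continuousAt
  have hgcont : Continuous g := continuous_iff_continuousAt.2 fun u => (hgdiff u).continuousAt
  obtain ⟨z₀, hz₀⟩ := hZcomp.exists_isMinOn hZne hgcont.continuousOn
  have hfK : sInf (f '' Z) ≤ f (x K) :=
    csInf_le (hZcomp.image hfcont).bddBelow (Set.mem_image_of_mem f (hxZ K))
  have hdescent : ∀ k, γ * ⟪gradf (x k), x k - s k⟫_ℝ ≤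
      f (x k) - f (x (k + 1)) + γ ^ 2 * (Lf * D ^ 2 / 2) := by
    intro k
    have h := le_sub_mul_inner_add_of_step hfdiff hLf hfLip (hD _ (hsmem k).1 _ (hxZ k)) hγ0.le
    rw [← hupd k] at h
    linarith
  obtain ⟨k, hk, hgap⟩ := exists_lt_le_of_mul_le_sub_add hγ0 hK hdescent hfK
  refine ⟨k, hk, le_trans ?_ (hgap.trans_eq (by ring))⟩
  refine sSup_image_inner_sub_le ⟨z₀, hz₀⟩ fun z ⟨hzZ, hzmin⟩ => hsmin k z hzZ ?_
  have h := hgconv.inner_sub_le_of_hasGradientAt (Set.mem_univ _) (Set.mem_univ z) (hgdiff (x k))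
  linarith [isMinOn_iff.1 hzmin _ hx0]
end

section
/- Suppose g satisfies the r-th-order Hölderian error bound with constant α > 0 and r ≥ 1, f has L_f-Lipschitz gradient, and let M = max_{x∈X*_g} ‖∇f(x)‖. Then every x̂ ∈ Z with g(x̂) − g* ≤ ε_g satisfies G(x̂) ≥ −M (r ε_g/α)^{1/r} − L_f (r ε_g/α)^{2/r}, where G(x) = max_{s∈X*_g} ⟨∇f(x), x − s⟩ is the Frank–Wolfe gap. -/
/-!
Let `s` be a point of `X*_g` nearest to `x̂`. The error bound gives
`‖x̂ - s‖ = dist(x̂, X*_g) ≤ δ := (r ε_g / α)^{1/r}`. Splitting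
`⟨∇f(x̂), x̂ - s⟩ = ⟨∇f(s), x̂ - s⟩ + ⟨∇f(x̂) - ∇f(s), x̂ - s⟩` and applying Cauchy–Schwarz and the
Lipschitz bound to the two terms gives `⟨∇f(x̂), x̂ - s⟩ ≥ -M δ - L_f δ²`, and the Frank–Wolfe gap
dominates this inner product.
-/

open scoped InnerProductSpace

theorem IsCompact.setOf_isMinOn {X : Type*} [TopologicalSpace X] {Z : Set X} {g : X → ℝ}
    (hZ : IsCompact Z) (hg : Continuous g) : IsCompact {z | z ∈ Z ∧ IsMinOn g Z z} := by
  have hset : {z | z ∈ Z ∧ IsMinOn g Z z} = Z ∩ ⋂ y ∈ Z, {z | g z ≤ g y} := by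
    ext z
    simp only [Set.mem_ofPred_eq, Set.mem_inter_iff, Set.mem_iInter, isMinOn_iff]
  rw [hset]
  exact hZ.inter_right (isClosed_biInter fun y _ => isClosed_le hg continuous_const)

theorem le_rpow_of_holder_bound {α r D ε : ℝ} (hα : 0 < α) (hr : 0 < r) (hD : 0 ≤ D)
    (h : α / r * D ^ r ≤ ε) : D ≤ (r * ε / α) ^ (1 / r) := by
  have hDr : D ^ r ≤ r * ε / α := by
    rw [le_div_iff₀ hα]
    rw [div_mul_eq_mul_div, div_le_iff₀ hr] at h
    linarith
  calc D = (D ^ r) ^ (1 / r) := by rw [one_div, Real.rpow_rpow_inv hD hr.ne']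
    _ ≤ (r * ε / α) ^ (1 / r) :=
      Real.rpow_le_rpow (Real.rpow_nonneg hD r) hDr (by positivity)

theorem continuous_of_norm_sub_le_mul {E : Type*} [SeminormedAddCommGroup E] {F : E → E} {L : ℝ}
    (hF : ∀ x y, ‖F x - F y‖ ≤ L * ‖x - y‖) : Continuous F :=
  (LipschitzWith.of_dist_le' (K := L) fun x y => by simpa only [dist_eq_norm] using hF x y).continuous

section LipschitzGradient

variable {E : Type*} [NormedAddCommGroup E] [InnerProductSpace ℝ E] {F : E → E} {L : ℝ}

theorem neg_sub_le_inner_sub_of_lipschitz (hF : ∀ x y, ‖F x - F y‖ ≤ L * ‖x - y‖) (x s : E) :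
    -(‖F s‖ * ‖x - s‖) - L * ‖x - s‖ ^ 2 ≤ ⟪F x, x - s⟫_ℝ := by
  have hsplit : ⟪F x, x - s⟫_ℝ = ⟪F s, x - s⟫_ℝ + ⟪F x - F s, x - s⟫_ℝ := by
    rw [inner_sub_left]; ring
  have hfirst : -(‖F s‖ * ‖x - s‖) ≤ ⟪F s, x - s⟫_ℝ :=
    neg_le_of_abs_le (abs_real_inner_le_norm _ _)
  have hsecond : -(L * ‖x - s‖ ^ 2) ≤ ⟪F x - F s, x - s⟫_ℝ := by
    calc -(L * ‖x - s‖ ^ 2) ≤ -(‖F x - F s‖ * ‖x - s‖) := by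
          rw [sq, ← mul_assoc]
          exact neg_le_neg (mul_le_mul_of_nonneg_right (hF x s) (norm_nonneg _))
      _ ≤ ⟪F x - F s, x - s⟫_ℝ := neg_le_of_abs_le (abs_real_inner_le_norm _ _)
  linarith

theorem neg_mul_sub_le_inner_sub_of_lipschitz (hF : ∀ x y, ‖F x - F y‖ ≤ L * ‖x - y‖)
    (hL : 0 ≤ L) {x s : E} {M δ : ℝ} (hM : ‖F s‖ ≤ M) (hδ : ‖x - s‖ ≤ δ) :
    -M * δ - L * δ ^ 2 ≤ ⟪F x, x - s⟫_ℝ := by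
  have hδ0 : 0 ≤ δ := (norm_nonneg _).trans hδ
  have hlin : ‖F s‖ * ‖x - s‖ ≤ M * δ := mul_le_mul hM hδ (norm_nonneg _) ((norm_nonneg _).trans hM)
  have hquad : L * ‖x - s‖ ^ 2 ≤ L * δ ^ 2 := by gcongr
  linarith [neg_sub_le_inner_sub_of_lipschitz hF x s]

end LipschitzGradient

theorem statement13_general {d : ℕ} (Z : Set (EuclideanSpace ℝ (Fin d)))
    (hZcomp : IsCompact Z)
    (g : EuclideanSpace ℝ (Fin d) → ℝ)
    (gradf gradg : EuclideanSpace ℝ (Fin d) → EuclideanSpace ℝ (Fin d))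
    (Lf : ℝ) (hLf : 0 ≤ Lf)
    (hfLip : ∀ x y, ‖gradf x - gradf y‖ ≤ Lf * ‖x - y‖)
    (hgdiff : ∀ x, HasGradientAt g (gradg x) x)
    (α r : ℝ) (hα : 0 < α) (hr : 1 ≤ r)
    (hHEB : ∀ x ∈ Z,
      (α / r) * Metric.infDist x {z | z ∈ Z ∧ IsMinOn g Z z} ^ r ≤ g x - sInf (g '' Z))
    (M : ℝ) (hM : M = sSup ((fun x => ‖gradf x‖) '' {z | z ∈ Z ∧ IsMinOn g Z z}))
    (εg : ℝ) (hεg : 0 < εg)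
    (xhat : EuclideanSpace ℝ (Fin d)) (hxhatZ : xhat ∈ Z)
    (hxhatg : g xhat - sInf (g '' Z) ≤ εg) :
    -M * (r * εg / α) ^ (1 / r) - Lf * (r * εg / α) ^ (2 / r) ≤
      sSup ((fun s => ⟪gradf xhat, xhat - s⟫_ℝ) '' {z | z ∈ Z ∧ IsMinOn g Z z}) := by
  set X := {z | z ∈ Z ∧ IsMinOn g Z z}
  have hr0 : 0 < r := zero_lt_one.trans_le hr
  have hg : Continuous g := continuous_iff_continuousAt.2 fun x => (hgdiff x).continuousAt
  have hXc : IsCompact X := hZcomp.setOf_isMinOn hg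
  have hXne : X.Nonempty := hZcomp.exists_isMinOn ⟨xhat, hxhatZ⟩ hg.continuousOn
  obtain ⟨s, hsX, hsdist⟩ := hXc.exists_infDist_eq_dist hXne xhat
  have hδ : ‖xhat - s‖ ≤ (r * εg / α) ^ (1 / r) := by
    rw [← dist_eq_norm, ← hsdist]
    exact le_rpow_of_holder_bound hα hr0 Metric.infDist_nonneg ((hHEB xhat hxhatZ).trans hxhatg)
  have hMs : ‖gradf s‖ ≤ M := hM ▸ le_csSup
    (hXc.bddAbove_image (continuous_of_norm_sub_le_mul hfLip).norm.continuousOn) ⟨s, hsX, rfl⟩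
  have hgap : ⟪gradf xhat, xhat - s⟫_ℝ ≤ sSup ((fun s => ⟪gradf xhat, xhat - s⟫_ℝ) '' X) :=
    le_csSup (hXc.bddAbove_image (by fun_prop)) ⟨s, hsX, rfl⟩
  have hsq : (r * εg / α) ^ (2 / r) = ((r * εg / α) ^ (1 / r)) ^ 2 := by
    rw [← Real.rpow_natCast, ← Real.rpow_mul (by positivity)]
    ring_nf
  rw [hsq]
  exact (neg_mul_sub_le_inner_sub_of_lipschitz hfLip hLf hMs hδ).trans hgap

/-- **Proposition 1(ii).** Under the `r`-th-order Hölderian error bound on `g`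
with constant `α > 0` and `r ≥ 1`, if `f` has `L_f`-Lipschitz gradient, then any `x̂ ∈ Z`
with `g(x̂) − g* ≤ ε_g` satisfies
`G(x̂) ≥ −M (r ε_g/α)^{1/r} − L_f (r ε_g/α)^{2/r}`, where
`M = max_{x∈X*_g} ‖∇f(x)‖` and `G(x) = max_{s∈X*_g} ⟨∇f(x), x − s⟩`. -/
theorem statement13 {d : ℕ} (Z : Set (EuclideanSpace ℝ (Fin d)))
    (hZne : Z.Nonempty) (hZcomp : IsCompact Z) (hZconv : Convex ℝ Z)
    (f g : EuclideanSpace ℝ (Fin d) → ℝ)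
    (gradf gradg : EuclideanSpace ℝ (Fin d) → EuclideanSpace ℝ (Fin d))
    (hfdiff : ∀ x, HasGradientAt f (gradf x) x)
    (Lf : ℝ) (hLf : 0 ≤ Lf)
    (hfLip : ∀ x y, ‖gradf x - gradf y‖ ≤ Lf * ‖x - y‖)
    (hgconv : ConvexOn ℝ Set.univ g)
    (hgdiff : ∀ x, HasGradientAt g (gradg x) x)
    (α r : ℝ) (hα : 0 < α) (hr : 1 ≤ r)
    (hHEB : ∀ x ∈ Z,
      (α / r) * Metric.infDist x {z | z ∈ Z ∧ IsMinOn g Z z} ^ r ≤ g x - sInf (g '' Z))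
    (M : ℝ) (hM : M = sSup ((fun x => ‖gradf x‖) '' {z | z ∈ Z ∧ IsMinOn g Z z}))
    (εg : ℝ) (hεg : 0 < εg)
    (xhat : EuclideanSpace ℝ (Fin d)) (hxhatZ : xhat ∈ Z)
    (hxhatg : g xhat - sInf (g '' Z) ≤ εg) :
    -M * (r * εg / α) ^ (1 / r) - Lf * (r * εg / α) ^ (2 / r) ≤
      sSup ((fun s => ⟪gradf xhat, xhat - s⟫_ℝ) '' {z | z ∈ Z ∧ IsMinOn g Z z}) :=
  statement13_general Z hZcomp g gradf gradg Lf hLf hfLip hgdiff α r hα hr hHEB M hM εg hεg xhat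
    hxhatZ hxhatg
end
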